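/- arXiv:1006.3864 — 6 statements merged into one kernel-verified Lean document; each statement's English description precedes it below -/
import Mathlib

section
/- Let E be a finite-dimensional real normed vector space and let X be a finite subset of E. Then there exists a compact subset Y of E such that for every positive integer n, the convex hull of the dilated set n•X = {n·x : x ∈ X} is contained in the Minkowski sum Y + (X + X + ⋯ + X) (with n summands X), i.e., every point of conv(n•X) can be written as y + x₁ + ⋯ + xₙ with y ∈ Y and x₁, …, xₙ ∈ X. -/
/-!
Write `v ∈ conv (n • X)` as `∑ (n wₓ) • x` with convex weights `w`. The reals `n wₓ` sum to `n`,
so they can be rounded to naturals `mₓ` with the same sum and `|n wₓ - mₓ| ≤ 1`; the point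
`∑ mₓ • x` is a sum of `n` elements of `X`, and the remainder `∑ (n wₓ - mₓ) • x` lies in the
ball of radius `∑ ‖x‖`, independent of `n`.
-/

open Pointwise Finset

theorem Finset.exists_nat_sum_eq_and_abs_sub_le_one {ι : Type*} (s : Finset ι) (a : ι → ℝ)
    (ha : ∀ i ∈ s, 0 ≤ a i) (N : ℕ) (hN : ∑ i ∈ s, a i = N) :
    ∃ m : ι → ℕ, ∑ i ∈ s, m i = N ∧ ∀ i ∈ s, |a i - m i| ≤ 1 := by
  classical
  have floor_le i (hi : i ∈ s) : (⌊a i⌋₊ : ℝ) ≤ a i := Nat.floor_le (ha i hi)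
  have lt_floor_add_one i : a i < ⌊a i⌋₊ + 1 := Nat.lt_floor_add_one (a i)
  set k := ∑ i ∈ s, ⌊a i⌋₊
  have hkN : k ≤ N := by
    have : (k : ℝ) ≤ N := by
      rw [← hN]; push_cast [k]; exact sum_le_sum floor_le
    exact_mod_cast this
  have hdeficit : N - k ≤ #s := by
    have : ((N - k : ℕ) : ℝ) ≤ #s := by
      rw [Nat.cast_sub hkN, ← hN, Nat.cast_sum, ← sum_sub_distrib, card_eq_sum_ones, Nat.cast_sum]
      exact sum_le_sum fun i _ => by push_cast; linarith [lt_floor_add_one i]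
    exact_mod_cast this
  -- Round everything down, then round up on `N - k` indices to restore the sum.
  obtain ⟨u, hus, hu⟩ := exists_subset_card_eq hdeficit
  refine ⟨fun i => ⌊a i⌋₊ + if i ∈ u then 1 else 0, ?_, fun i hi => ?_⟩
  · rw [sum_add_distrib, sum_boole, filter_mem_eq_inter, inter_eq_right.2 hus, hu]
    simp only [Nat.cast_id]; omega
  · rw [abs_le]
    dsimp only
    split_ifs <;> push_cast <;> constructor <;> linarith [floor_le i hi, lt_floor_add_one i]

theorem Finset.exists_fin_sum_eq_sum_nsmul {M : Type*} [AddCommMonoid M] (s : Finset M)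
    (m : M → ℕ) {n : ℕ} (hn : ∑ y ∈ s, m y = n) :
    ∃ x : Fin n → M, (∀ i, x i ∈ s) ∧ ∑ i, x i = ∑ y ∈ s, m y • y := by
  subst hn
  induction s using Finset.cons_induction with
  | empty =>
    rw [sum_empty]
    exact ⟨Fin.elim0, fun i => i.elim0, by simp⟩
  | cons a s ha ih =>
    obtain ⟨x, hxs, hx⟩ := ih
    rw [sum_cons]
    refine ⟨Fin.append (fun _ => a) x, fun i => ?_, ?_⟩
    · refine Fin.addCases (fun j => ?_) (fun j => ?_) i
      · simp
      · simp [hxs j]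
    · simp [Fin.sum_univ_add, hx]

/-- **Lemma (convex)**: If `X` is a finite subset of a finite-dimensional real normed vector
space `E`, then there is a compact subset `Y ⊆ E` such that for every positive integer `n`,
the convex hull of the dilate `n • X = {n • x | x ∈ X}` is contained in the Minkowski sum
`Y + (X + ⋯ + X)` (`n` summands), i.e. every point of `conv (n • X)` is of the form
`y + x₁ + ⋯ + xₙ` with `y ∈ Y` and all `xᵢ ∈ X`. -/
theorem stmt_0 {E : Type*} [NormedAddCommGroup E] [NormedSpace ℝ E] [FiniteDimensional ℝ E]
    (X : Set E) (hX : X.Finite) :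
    ∃ Y : Set E, IsCompact Y ∧
      ∀ n : ℕ, 0 < n → ∀ v ∈ convexHull ℝ ((n : ℝ) • X),
        ∃ y ∈ Y, ∃ x : Fin n → E, (∀ i, x i ∈ X) ∧ v = y + ∑ i, x i := by
  set s := hX.toFinset
  refine ⟨Metric.closedBall 0 (∑ y ∈ s, ‖y‖), isCompact_closedBall _ _, fun n _ v hv => ?_⟩
  rw [convexHull_smul, ← hX.coe_toFinset, Set.mem_smul_set] at hv
  obtain ⟨_, hc, rfl⟩ := hv
  obtain ⟨w, hw₀, hw₁, rfl⟩ := Finset.mem_convexHull'.1 hc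
  obtain ⟨m, hmn, hm⟩ := s.exists_nat_sum_eq_and_abs_sub_le_one (fun y => n * w y)
    (fun y hy => mul_nonneg n.cast_nonneg (hw₀ y hy)) n (by rw [← mul_sum, hw₁, mul_one])
  obtain ⟨x, hxs, hx⟩ := s.exists_fin_sum_eq_sum_nsmul m hmn
  have hrem : (n : ℝ) • ∑ y ∈ s, w y • y - ∑ i, x i = ∑ y ∈ s, (n * w y - m y) • y := by
    simp only [hx, sub_smul, sum_sub_distrib, smul_sum, mul_smul, Nat.cast_smul_eq_nsmul]
  refine ⟨_, ?_, x, fun i => hX.mem_toFinset.1 (hxs i), (sub_add_cancel _ _).symm⟩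
  rw [Metric.mem_closedBall, dist_zero_right, hrem]
  refine (norm_sum_le _ _).trans (sum_le_sum fun y hy => ?_)
  rw [norm_smul, Real.norm_eq_abs]
  exact mul_le_of_le_one_left (norm_nonneg y) (hm y hy)
end

section
/- Let E be a finite-dimensional real normed vector space and let X = {x₁, …, x_m} be a finite subset of E with m = |X| elements. Set R = 2m·max_{x ∈ X} ‖x‖ and let Y be the closed ball of radius R centered at the origin. Then for every positive integer n, the convex hull of n•X = {n·x : x ∈ X} is contained in Y + (X + X + ⋯ + X) (with n summands X). -/
open Pointwise

/-!
A point of `conv(n • X)` is `∑ₓ aₓ • x` with `aₓ ≥ 0` and `∑ₓ aₓ = n`. Rounding every `aₓ` down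
to `⌊aₓ⌋` and filling the missing `n - ∑ₓ ⌊aₓ⌋ ≤ |X|` summands with copies of one fixed point
of `X` gives a sum of `n` points of `X`. The fractional parts and the padding each contribute at
most `|X| · max ‖x‖` to the error.
-/

namespace Finset

variable {α : Type*} [AddCommMonoid α] [DecidableEq α]

theorem exists_fin_sum_eq_sum_nsmul_s1 (s : Finset α) (c : α → ℕ) :
    ∃ x : Fin (∑ a ∈ s, c a) → α, (∀ i, x i ∈ s) ∧ ∑ i, x i = ∑ a ∈ s, c a • a := by
  induction s using Finset.induction_on with
  | empty => exact ⟨finZeroElim, finZeroElim, by simp⟩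
  | insert a s ha ih =>
    obtain ⟨x, hxs, hx⟩ := ih
    rw [sum_insert ha, sum_insert ha]
    refine ⟨Fin.append (fun _ => a) x, fun i => ?_, ?_⟩
    · cases i using Fin.addCases <;> simp [hxs]
    · simp [Fin.sum_univ_add, hx]

theorem exists_fin_sum_eq_sum_nsmul_add_nsmul {s : Finset α} (c : α → ℕ) {a₀ : α}
    (ha₀ : a₀ ∈ s) {n : ℕ} (hn : ∑ a ∈ s, c a ≤ n) :
    ∃ x : Fin n → α, (∀ i, x i ∈ s) ∧
      ∑ i, x i = ∑ a ∈ s, c a • a + (n - ∑ a ∈ s, c a) • a₀ := by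
  obtain ⟨r, rfl⟩ := Nat.exists_eq_add_of_le hn
  obtain ⟨x, hxs, hx⟩ := s.exists_fin_sum_eq_sum_nsmul_s1 c
  refine ⟨Fin.append x (fun _ => a₀), fun i => ?_, ?_⟩
  · cases i using Fin.addCases <;> simp [hxs, ha₀]
  · simp [Fin.sum_univ_add, hx]

end Finset

theorem Finset.exists_fin_sum_norm_sub_le {E : Type*} [NormedAddCommGroup E] [NormedSpace ℝ E]
    (s : Finset E) (hs : s.Nonempty) {M : ℝ}
    (hM : ∀ x ∈ s, ‖x‖ ≤ M) {a : E → ℝ} (ha : ∀ x ∈ s, 0 ≤ a x) {n : ℕ}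
    (hn : ∑ x ∈ s, a x = n) :
    ∃ x : Fin n → E, (∀ i, x i ∈ s) ∧ ‖∑ y ∈ s, a y • y - ∑ i, x i‖ ≤ 2 * s.card * M := by
  classical
  obtain ⟨x₀, hx₀⟩ := hs
  set k : E → ℕ := fun y => ⌊a y⌋₊
  have hk_nonneg : ∀ y ∈ s, 0 ≤ a y - k y := fun y hy => sub_nonneg.2 (Nat.floor_le (ha y hy))
  have hk_le_one : ∀ y ∈ s, a y - k y ≤ 1 := fun y _ => by
    linarith [Nat.lt_floor_add_one (a y)]
  have hkn : ∑ y ∈ s, k y ≤ n := by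
    have : (∑ y ∈ s, k y : ℝ) ≤ n := hn ▸ sum_le_sum fun y hy => sub_nonneg.1 (hk_nonneg y hy)
    exact_mod_cast this
  obtain ⟨x, hxs, hx⟩ := s.exists_fin_sum_eq_sum_nsmul_add_nsmul k hx₀ hkn
  set r := n - ∑ y ∈ s, k y
  have hr : (r : ℝ) = ∑ y ∈ s, (a y - k y) := by
    rw [Nat.cast_sub hkn, sum_sub_distrib, hn, Nat.cast_sum]
  have hr_le : (r : ℝ) ≤ s.card := by
    rw [hr]
    simpa using sum_le_sum hk_le_one
  have h_frac : ‖∑ y ∈ s, (a y - k y) • y‖ ≤ s.card * M := by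
    calc _ ≤ ∑ _y ∈ s, M := norm_sum_le_of_le s fun y hy => ?_
      _ = s.card * M := by simp
    rw [norm_smul, Real.norm_of_nonneg (hk_nonneg y hy)]
    exact (mul_le_of_le_one_left (norm_nonneg y) (hk_le_one y hy)).trans (hM y hy)
  have h_pad : ‖(r : ℝ) • x₀‖ ≤ s.card * M := by
    rw [norm_smul, Real.norm_natCast]
    exact mul_le_mul hr_le (hM x₀ hx₀) (norm_nonneg _) (Nat.cast_nonneg _)
  refine ⟨x, hxs, ?_⟩
  calc ‖∑ y ∈ s, a y • y - ∑ i, x i‖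
      = ‖∑ y ∈ s, (a y - k y) • y - (r : ℝ) • x₀‖ := by
        simp only [hx, sub_smul, sum_sub_distrib, Nat.cast_smul_eq_nsmul]
        abel_nf
    _ ≤ s.card * M + s.card * M := (norm_sub_le _ _).trans (add_le_add h_frac h_pad)
    _ = 2 * s.card * M := by ring

theorem stmt_1_general {E : Type*} [NormedAddCommGroup E] [NormedSpace ℝ E]
    (X : Finset E) (hX : X.Nonempty) (m : ℕ) (hm : m = X.card)
    (R : ℝ) (hR : R = 2 * m * X.sup' hX (fun x => ‖x‖)) :
    ∀ n : ℕ, 0 < n → ∀ v ∈ convexHull ℝ ((n : ℝ) • (X : Set E)),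
      ∃ y ∈ Metric.closedBall (0 : E) R, ∃ x : Fin n → E,
        (∀ i, x i ∈ X) ∧ v = y + ∑ i, x i := by
  intro n _ v hv
  rw [convexHull_smul] at hv
  obtain ⟨_, hw, rfl⟩ := hv
  obtain ⟨f, hf0, hf1, rfl⟩ := Finset.mem_convexHull'.1 hw
  obtain ⟨x, hxX, hx⟩ := X.exists_fin_sum_norm_sub_le hX
    (M := X.sup' hX (‖·‖)) (fun y hy => X.le_sup' (‖·‖) hy) (a := fun y => n * f y)
    (fun y hy => mul_nonneg n.cast_nonneg (hf0 y hy))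
    (by rw [← Finset.mul_sum, hf1, mul_one])
  refine ⟨(n : ℝ) • ∑ y ∈ X, f y • y - ∑ i, x i, ?_, x, hxX, by abel⟩
  rw [mem_closedBall_zero_iff, hR, hm, Finset.smul_sum]
  simpa only [smul_smul] using hx

/-- **Lemma (convex, explicit bound)**: Let `X` be a finite nonempty subset of a
finite-dimensional real normed vector space `E`, with `m = |X|` elements, and let
`R = 2 * m * max_{x ∈ X} ‖x‖`.  Let `Y` be the closed ball of radius `R` about the origin.
Then for every positive integer `n`, the convex hull of the dilate `n • X = {n • x | x ∈ X}`
is contained in the Minkowski sum `Y + (X + ⋯ + X)` (`n` summands). -/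
theorem stmt_1 {E : Type*} [NormedAddCommGroup E] [NormedSpace ℝ E] [FiniteDimensional ℝ E]
    (X : Finset E) (hX : X.Nonempty) (m : ℕ) (hm : m = X.card)
    (R : ℝ) (hR : R = 2 * m * X.sup' hX (fun x => ‖x‖)) :
    ∀ n : ℕ, 0 < n → ∀ v ∈ convexHull ℝ ((n : ℝ) • (X : Set E)),
      ∃ y ∈ Metric.closedBall (0 : E) R, ∃ x : Fin n → E,
        (∀ i, x i ∈ X) ∧ v = y + ∑ i, x i :=
  stmt_1_general X hX m hm R hR
end

section
/- Let E be a finite-dimensional real normed vector space, let x₁, …, x_m ∈ E, let n be a positive integer, and let a₁, …, a_m be nonnegative real numbers with a₁ + ⋯ + a_m = 1. Then there exist nonnegative integers b₁, …, b_m with b₁ + ⋯ + b_m = n such that ‖(b₁x₁ + ⋯ + b_m x_m) − n(a₁x₁ + ⋯ + a_m x_m)‖ ≤ 2m·max_{1 ≤ i ≤ m} ‖x_i‖. -/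
/-- **Quantization step of the convexity lemma**: Given `x₁, …, x_m` in a finite-dimensional
real normed vector space, a positive integer `n`, and nonnegative reals `a₁, …, a_m` with
`a₁ + ⋯ + a_m = 1`, there are nonnegative integers `b₁, …, b_m` with `b₁ + ⋯ + b_m = n`
such that `‖(b₁ x₁ + ⋯ + b_m x_m) - n (a₁ x₁ + ⋯ + a_m x_m)‖ ≤ 2 m max_i ‖x_i‖`. -/
theorem stmt_2 {E : Type*} [NormedAddCommGroup E] [NormedSpace ℝ E] [FiniteDimensional ℝ E]
    (m : ℕ) (x : Fin m → E) (n : ℕ) (hn : 0 < n)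
    (a : Fin m → ℝ) (ha : ∀ i, 0 ≤ a i) (ha1 : ∑ i, a i = 1) :
    ∃ b : Fin m → ℕ, ∑ i, b i = n ∧
      ‖(∑ i, (b i : ℝ) • x i) - (n : ℝ) • (∑ i, a i • x i)‖ ≤
        2 * m * (⨆ i, ‖x i‖) := by
  have hm : 0 < m := by
    rcases Nat.eq_zero_or_pos m with h | h
    · subst h; simp at ha1
    · exact h
  set i0 : Fin m := ⟨0, hm⟩ with hi0
  set f : Fin m → ℕ := fun i => ⌊(n : ℝ) * a i⌋₊ with hf
  have hfle : ∀ i, (f i : ℝ) ≤ (n : ℝ) * a i := fun i =>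
    Nat.floor_le (mul_nonneg (Nat.cast_nonneg n) (ha i))
  have hflt : ∀ i, (n : ℝ) * a i < f i + 1 := fun i => Nat.lt_floor_add_one _
  set s : Finset (Fin m) := Finset.univ.erase i0 with hs
  have hcard : (s.card : ℝ) = (m : ℝ) - 1 := by
    rw [hs, Finset.card_erase_of_mem (Finset.mem_univ _), Finset.card_univ, Fintype.card_fin]
    rw [Nat.cast_sub hm]; norm_num
  have htot : ∑ j, (n : ℝ) * a j = n := by rw [← Finset.mul_sum, ha1, mul_one]
  have hsplit : (n : ℝ) * a i0 + ∑ j ∈ s, (n : ℝ) * a j = n := by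
    rw [hs]
    exact (Finset.add_sum_erase _ (fun j => (n : ℝ) * a j) (Finset.mem_univ i0)).trans htot
  set S : ℕ := ∑ j ∈ s, f j with hS
  have hSle : (S : ℝ) ≤ ∑ j ∈ s, (n : ℝ) * a j := by
    rw [hS]
    push_cast
    exact Finset.sum_le_sum fun j _ => hfle j
  have hSn : S ≤ n := by
    have h1 : (S : ℝ) ≤ (n : ℝ) := by
      have := mul_nonneg (Nat.cast_nonneg n : (0:ℝ) ≤ n) (ha i0)
      linarith
    exact_mod_cast h1
  refine ⟨fun i => if i = i0 then n - S else f i, ?_, ?_⟩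
  · rw [← Finset.add_sum_erase _ _ (Finset.mem_univ i0), ← hs, if_pos rfl]
    have : ∑ j ∈ s, (if j = i0 then n - S else f j) = S :=
      Finset.sum_congr rfl fun j hj => if_neg (Finset.ne_of_mem_erase hj)
    rw [this, Nat.sub_add_cancel hSn]
  · set b : Fin m → ℕ := fun i => if i = i0 then n - S else f i with hb
    set c : Fin m → ℝ := fun i => (b i : ℝ) - (n : ℝ) * a i with hc
    have hrw : (∑ i, (b i : ℝ) • x i) - (n : ℝ) • (∑ i, a i • x i)
        = ∑ i, c i • x i := by
      rw [Finset.smul_sum, ← Finset.sum_sub_distrib]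
      refine Finset.sum_congr rfl fun i _ => ?_
      rw [hc, sub_smul, smul_smul]
    set M : ℝ := ⨆ i, ‖x i‖ with hM
    have hMle : ∀ i, ‖x i‖ ≤ M := fun i => by
      rw [hM]; exact le_ciSup (Set.Finite.bddAbove (Set.finite_range fun i => ‖x i‖)) i
    have hM0 : 0 ≤ M := le_trans (norm_nonneg _) (hMle i0)
    have hb0 : (b i0 : ℝ) = (n : ℝ) - S := by
      rw [show b i0 = n - S from if_pos rfl, Nat.cast_sub hSn]
    have hScast : (S : ℝ) = ∑ j ∈ s, (f j : ℝ) := by rw [hS]; push_cast; rfl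
    have hc0 : c i0 = ∑ j ∈ s, ((n : ℝ) * a j - f j) := by
      have h1 : c i0 = (b i0 : ℝ) - (n : ℝ) * a i0 := rfl
      rw [h1, hb0, Finset.sum_sub_distrib]
      linarith [hsplit, hScast]
    have hc0abs : |c i0| ≤ (m : ℝ) - 1 := by
      rw [hc0, abs_of_nonneg (Finset.sum_nonneg fun j _ => by linarith [hfle j])]
      calc ∑ j ∈ s, ((n : ℝ) * a j - f j) ≤ ∑ j ∈ s, (1 : ℝ) :=
            Finset.sum_le_sum fun j _ => by linarith [hflt j]
        _ = s.card := by rw [Finset.sum_const, nsmul_eq_mul, mul_one]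
        _ = (m : ℝ) - 1 := hcard
    have hcj : ∀ j ∈ s, |c j| ≤ 1 := by
      intro j hj
      have hji : j ≠ i0 := Finset.ne_of_mem_erase hj
      have h1 : c j = (f j : ℝ) - (n : ℝ) * a j := by simp [hc, hb, hji]
      rw [h1, abs_sub_comm, abs_of_nonneg (by linarith [hfle j])]
      linarith [hflt j]
    have hsumabs : ∑ i, |c i| ≤ 2 * m := by
      rw [← Finset.add_sum_erase _ _ (Finset.mem_univ i0), ← hs]
      have h1 : ∑ j ∈ s, |c j| ≤ (m : ℝ) - 1 := by
        calc ∑ j ∈ s, |c j| ≤ ∑ j ∈ s, (1 : ℝ) := Finset.sum_le_sum hcj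
          _ = s.card := by rw [Finset.sum_const, nsmul_eq_mul, mul_one]
          _ = (m : ℝ) - 1 := hcard
      linarith
    rw [hrw]
    calc ‖∑ i, c i • x i‖ ≤ ∑ i, ‖c i • x i‖ := norm_sum_le _ _
      _ ≤ ∑ i, |c i| * M := by
          refine Finset.sum_le_sum fun i _ => ?_
          rw [norm_smul, Real.norm_eq_abs]
          exact mul_le_mul_of_nonneg_left (hMle i) (abs_nonneg _)
      _ = (∑ i, |c i|) * M := (Finset.sum_mul _ _ _).symm
      _ ≤ 2 * m * M := mul_le_mul_of_nonneg_right hsumabs hM0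
end

section
/- Let V be a finite-dimensional real vector space carrying a reduced crystallographic root system Φ with a chosen base of simple roots α₁, …, α_r, and let W be the Weyl group (the group generated by the reflections in the roots of Φ), acting on V. For μ, λ ∈ V write μ ≤ λ if λ − μ = Σᵢ xᵢαᵢ with all xᵢ ≥ 0. If μ, λ ∈ V satisfy wμ ≤ λ for every w ∈ W, then the convex hull of the orbit Wμ is contained in the convex hull of the orbit Wλ. -/
/-!
Suppose `w₀ μ` lies outside `Conv(Wλ)` and separate it from `Wλ` by a linear functional `φ`.
Choose `w ∈ W` maximizing `φ (w ξ)` for a strictly dominant `ξ`; then `φ ∘ w` is nonnegative on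
the simple roots, so the hypothesis `w⁻¹ w₀ μ ≤ λ` gives `φ (w₀ μ) ≤ φ (w λ)`, contradicting the
separation. The Weyl group is finite because it permutes the roots, which span `V`.
-/

open Function

/-- A choice of base (system of simple roots) for a root pairing: the simple roots are
linearly independent, the indexing is injective, and every root is either a nonnegative or a
nonpositive linear combination of the simple roots. -/
def RootPairing.IsBaseOf {ι V N : Type*} [AddCommGroup V] [Module ℝ V]
    [AddCommGroup N] [Module ℝ N] {r : ℕ}
    (P : RootPairing ι ℝ V N) (b : Fin r → ι) : Prop :=
  Function.Injective b ∧
  LinearIndependent ℝ (fun i => P.root (b i)) ∧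
  ∀ j : ι, (∃ c : Fin r → ℝ, (∀ i, 0 ≤ c i) ∧ P.root j = ∑ i, c i • P.root (b i)) ∨
           (∃ c : Fin r → ℝ, (∀ i, c i ≤ 0) ∧ P.root j = ∑ i, c i • P.root (b i))

/-- A root system is a root pairing for which the roots and coroots span their ambient modules
(the definition of `RootSystem` in the older Mathlib, where it was a structure). -/
structure RootSystem (ι R M N : Type*) [CommRing R] [AddCommGroup M] [Module R M]
    [AddCommGroup N] [Module R N] extends RootPairing ι R M N where
  span_root_eq_top : Submodule.span R (Set.range root) = ⊤
  span_coroot_eq_top : Submodule.span R (Set.range coroot) = ⊤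

open Set Module Submodule

theorem exists_dual_lt_of_notMem_convexHull {V : Type*} [AddCommGroup V] [Module ℝ V]
    [FiniteDimensional ℝ V] {s : Set V} (hs : s.Finite) {p : V} (hp : p ∉ convexHull ℝ s) :
    ∃ φ : Dual ℝ V, ∀ x ∈ s, φ x < φ p := by
  let e := (Module.finBasis ℝ V).equivFun
  have hep : e p ∉ convexHull ℝ (e '' s) := by
    rwa [← LinearEquiv.coe_toLinearMap, ← LinearMap.image_convexHull, LinearEquiv.coe_toLinearMap,
      e.injective.mem_set_image]
  obtain ⟨f, u, hfs, hfp⟩ := geometric_hahn_banach_closed_point (convex_convexHull ℝ _)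
    ((hs.image e).isClosed_convexHull (𝕜 := ℝ)) hep
  exact ⟨f.toLinearMap ∘ₗ e.toLinearMap,
    fun x hx => (hfs _ (subset_convexHull ℝ _ (mem_image_of_mem e hx))).trans hfp⟩

theorem Subgroup.finite_of_forall_mapsTo {K V : Type*} [Semiring K] [AddCommMonoid V] [Module K V]
    {s : Set V} (hs : s.Finite) (hspan : span K s = ⊤) (G : Subgroup (V ≃ₗ[K] V))
    (hG : ∀ g ∈ G, MapsTo g s s) : (G : Set (V ≃ₗ[K] V)).Finite := by
  have := hs.to_subtype
  refine Set.finite_coe_iff.mp (Finite.of_injective (fun g : G => (hG g g.2).restrict) ?_)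
  intro g g' hgg'
  refine Subtype.ext (LinearEquiv.toLinearMap_injective (LinearMap.ext_on hspan fun x hx => ?_))
  exact congrArg Subtype.val (congrFun hgg' ⟨x, hx⟩)

theorem apply_le_apply_of_sub_eq_sum {R M κ : Type*} [CommRing R] [PartialOrder R]
    [IsOrderedRing R] [AddCommGroup M] [Module R M] [Fintype κ] {ψ : Dual R M} {v : κ → M}
    (hψ : ∀ i, 0 ≤ ψ (v i)) {a c : M} {x : κ → R} (hx : ∀ i, 0 ≤ x i)
    (h : a - c = ∑ i, x i • v i) : ψ c ≤ ψ a := by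
  have : 0 ≤ ψ (a - c) := by
    rw [h, map_sum]
    exact Finset.sum_nonneg fun i _ => by rw [map_smul, smul_eq_mul]; exact mul_nonneg (hx i) (hψ i)
  rwa [map_sub, sub_nonneg] at this

namespace RootPairing

variable {ι R M N : Type*} [AddCommGroup M] [AddCommGroup N]

section CommRing

variable [CommRing R] [Module R M] [Module R N] (P : RootPairing ι R M N)

theorem mapsTo_range_root_of_mem_closure_reflection {w : M ≃ₗ[R] M}
    (hw : w ∈ Subgroup.closure (range P.reflection)) : MapsTo w (range P.root) (range P.root) := by
  induction hw using Subgroup.closure_induction'' with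
  | mem _ hx =>
    obtain ⟨k, rfl⟩ := hx
    rintro _ ⟨i, rfl⟩
    exact ⟨P.reflectionPerm k i, by simp⟩
  | inv_mem _ hx =>
    obtain ⟨k, rfl⟩ := hx
    rintro _ ⟨i, rfl⟩
    exact ⟨P.reflectionPerm k i, by simp [P.reflection_inv]⟩
  | one => exact mapsTo_id _
  | mul _ _ _ _ hx hy => exact hx.comp hy

theorem finite_closure_range_reflection [Finite ι] (hspan : span R (range P.root) = ⊤) :
    (Subgroup.closure (range P.reflection) : Set (M ≃ₗ[R] M)).Finite :=
  Subgroup.finite_of_forall_mapsTo (finite_range _) hspan _ fun _ =>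
    P.mapsTo_range_root_of_mem_closure_reflection

end CommRing

theorem exists_mem_closure_reflection_forall_nonneg [CommRing R] [LinearOrder R]
    [IsStrictOrderedRing R] [Module R M] [Module R N] (P : RootPairing ι R M N)
    (hW : (Subgroup.closure (range P.reflection) : Set (M ≃ₗ[R] M)).Finite)
    {s : Set ι} {ξ : M} (hξ : ∀ i ∈ s, 0 < P.coroot' i ξ) (φ : Dual R M) :
    ∃ w ∈ Subgroup.closure (range P.reflection), ∀ i ∈ s, 0 ≤ φ (w (P.root i)) := by
  obtain ⟨w, hw, hmax⟩ := Set.exists_max_image _ (fun w : M ≃ₗ[R] M => φ (w ξ)) hW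
    ⟨1, one_mem _⟩
  refine ⟨w, hw, fun i hi => ?_⟩
  -- `w` maximizes `φ (w ξ)`, and `w s_i ξ = w ξ - ⟨ξ, α_i^∨⟩ w α_i`
  have hle := hmax (w * P.reflection i) (mul_mem hw (Subgroup.subset_closure (mem_range_self i)))
  simp only [LinearEquiv.mul_apply, reflection_apply, map_sub, map_smul, smul_eq_mul,
    sub_le_self_iff] at hle
  exact nonneg_of_mul_nonneg_right hle (hξ i hi)

theorem exists_coroot'_eq_one [Fintype ι] [Field R] [Module R M] [Module R N]
    (P : RootPairing ι R M N) [P.IsAnisotropic] [P.IsRootSystem] [NeZero (2 : R)] {s : Set ι}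
    (hs : LinearIndepOn R P.root s) : ∃ ξ : M, ∀ i ∈ s, P.coroot' i ξ = 1 := by
  obtain ⟨f, hf⟩ := exists_dual_forall_apply_eq_one (P.linearIndepOn_coroot_iff.mpr hs)
  obtain ⟨ξ, rfl⟩ := P.toLinearMap.toPerfPair.surjective f
  exact ⟨ξ, hf⟩

end RootPairing

theorem stmt_4_general {ι V N : Type*} [Fintype ι] [AddCommGroup V] [Module ℝ V]
    [FiniteDimensional ℝ V] [AddCommGroup N] [Module ℝ N]
    (P : RootSystem ι ℝ V N)
    (r : ℕ) (b : Fin r → ι) (hb : P.toRootPairing.IsBaseOf b)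
    (μ lam : V)
    (h : ∀ w ∈ (Subgroup.closure (Set.range P.reflection)), ∃ x : Fin r → ℝ, (∀ i, 0 ≤ x i) ∧
      lam - w μ = ∑ i, x i • P.root (b i)) :
    convexHull ℝ ((fun w : V ≃ₗ[ℝ] V => w μ) '' ((Subgroup.closure (Set.range P.reflection)) : Set (V ≃ₗ[ℝ] V))) ⊆
      convexHull ℝ ((fun w : V ≃ₗ[ℝ] V => w lam) '' ((Subgroup.closure (Set.range P.reflection)) : Set (V ≃ₗ[ℝ] V))) := by
  have : P.IsRootSystem := ⟨P.span_root_eq_top, P.span_coroot_eq_top⟩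
  have hW := P.finite_closure_range_reflection P.span_root_eq_top
  obtain ⟨hb_inj, hb_li, -⟩ := hb
  obtain ⟨ξ, hξ⟩ := P.exists_coroot'_eq_one ((linearIndepOn_range_iff hb_inj _).mpr hb_li)
  refine convexHull_min ?_ (convex_convexHull ℝ _)
  rintro _ ⟨w₀, hw₀, rfl⟩
  by_contra hout
  obtain ⟨φ, hφ⟩ := exists_dual_lt_of_notMem_convexHull (hW.image _) hout
  obtain ⟨w, hw, hdom⟩ :=
    P.exists_mem_closure_reflection_forall_nonneg hW (fun i hi => (hξ i hi).symm ▸ one_pos) φ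
  obtain ⟨x, hx, hsub⟩ := h (w⁻¹ * w₀) (mul_mem (inv_mem hw) hw₀)
  have hle : φ (w ((w⁻¹ * w₀) μ)) ≤ φ (w lam) :=
    apply_le_apply_of_sub_eq_sum (ψ := φ ∘ₗ w.toLinearMap) (fun i => hdom _ (mem_range_self i))
      hx hsub
  exact (hφ _ (mem_image_of_mem _ hw)).not_ge (by simpa using hle)

/-- **Lemma (worbit)**: Let `Φ` be a reduced crystallographic root system on a
finite-dimensional real vector space `V`, with base of simple roots `α₁, …, α_r` and Weyl
group `W`.  Write `μ ≤ λ` when `λ - μ` is a nonnegative combination of the simple roots.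
If `μ, λ ∈ V` satisfy `w μ ≤ λ` for all `w ∈ W`, then `Conv(Wμ) ⊆ Conv(Wλ)`. -/
theorem stmt_4 {ι V N : Type*} [Fintype ι] [AddCommGroup V] [Module ℝ V]
    [FiniteDimensional ℝ V] [AddCommGroup N] [Module ℝ N]
    (P : RootSystem ι ℝ V N) (hcrys : P.IsCrystallographic) (hred : P.IsReduced)
    (r : ℕ) (b : Fin r → ι) (hb : P.toRootPairing.IsBaseOf b)
    (μ lam : V)
    (h : ∀ w ∈ (Subgroup.closure (Set.range P.reflection)), ∃ x : Fin r → ℝ, (∀ i, 0 ≤ x i) ∧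
      lam - w μ = ∑ i, x i • P.root (b i)) :
    convexHull ℝ ((fun w : V ≃ₗ[ℝ] V => w μ) '' ((Subgroup.closure (Set.range P.reflection)) : Set (V ≃ₗ[ℝ] V))) ⊆
      convexHull ℝ ((fun w : V ≃ₗ[ℝ] V => w lam) '' ((Subgroup.closure (Set.range P.reflection)) : Set (V ≃ₗ[ℝ] V))) :=
  stmt_4_general P r b hb μ lam h
end

section
/- Let V be a finite-dimensional real vector space, let α₁, …, α_r ∈ V, let F ⊂ V be a finite set, and let μ, λ ∈ V. Suppose that for every positive integer n there exist nonnegative integers n₁, …, n_r and an element ν_n ∈ F such that nμ = nλ − Σᵢ nᵢαᵢ + ν_n. Then λ − μ lies in the convex cone generated by α₁, …, α_r; that is, λ − μ = Σᵢ xᵢαᵢ for some nonnegative real numbers x₁, …, x_r. -/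
/-!
Dividing the hypothesis by `n` shows that `λ - μ + n⁻¹ • ν_n` lies in the cone generated by the
`αᵢ`, and these points converge to `λ - μ` since `F` is finite. A finitely generated cone is closed:
by the conical Carathéodory theorem it is a finite union of cones on linearly independent
subfamilies, each the image of the closed orthant under an injective linear map from a
finite-dimensional space.
-/

open Filter Topology

section ConicalHull

variable {ι W : Type*} [AddCommGroup W] [Module ℝ W]

def conicalHull [Fintype ι] (β : ι → W) : Set W :=
  {v | ∃ x : ι → ℝ, (∀ i, 0 ≤ x i) ∧ ∑ i, x i • β i = v}

theorem smul_mem_conicalHull [Fintype ι] {β : ι → W} {v : W} {c : ℝ} (hc : 0 ≤ c)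
    (hv : v ∈ conicalHull β) : c • v ∈ conicalHull β := by
  obtain ⟨x, hx, rfl⟩ := hv
  exact ⟨fun i => c * x i, fun i => mul_nonneg hc (hx i), by simp [Finset.smul_sum, mul_smul]⟩

theorem LinearMap.map_mem_conicalHull {W' : Type*} [AddCommGroup W'] [Module ℝ W'] [Fintype ι]
    (f : W →ₗ[ℝ] W') {β : ι → W} {v : W} (hv : v ∈ conicalHull β) :
    f v ∈ conicalHull (f ∘ β) := by
  obtain ⟨x, hx, rfl⟩ := hv
  exact ⟨x, hx, by simp⟩

/-- The Carathéodory step: move `x` along a dependency `g` until a coordinate on `s` vanishes. -/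
theorem exists_nonneg_sub_mul_eq_zero {s : Finset ι} {x g : ι → ℝ} (hx : ∀ i ∈ s, 0 ≤ x i)
    (hg : ∃ j ∈ s, 0 < g j) :
    ∃ t : ℝ, ∃ i₀ ∈ s, (∀ i ∈ s, 0 ≤ x i - t * g i) ∧ x i₀ - t * g i₀ = 0 := by
  classical
  obtain ⟨j, hj, hgj⟩ := hg
  obtain ⟨i₀, hi₀, hmin⟩ := (s.filter (0 < g ·)).exists_min_image (fun i => x i / g i)
    ⟨j, Finset.mem_filter.mpr ⟨hj, hgj⟩⟩
  obtain ⟨hi₀s, hgi₀⟩ := Finset.mem_filter.mp hi₀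
  refine ⟨x i₀ / g i₀, i₀, hi₀s, fun i hi => ?_, by field_simp; ring⟩
  rcases le_or_gt (g i) 0 with hgi | hgi
  · have : 0 ≤ x i₀ / g i₀ := div_nonneg (hx i₀ hi₀s) hgi₀.le
    nlinarith [hx i hi]
  · have := hmin i (Finset.mem_filter.mpr ⟨hi, hgi⟩)
    rw [le_div_iff₀ hgi] at this
    linarith

theorem exists_linearIndepOn_sum_eq (β : ι → W) (s : Finset ι) (x : ι → ℝ)
    (hx : ∀ i ∈ s, 0 ≤ x i) :
    ∃ t ⊆ s, LinearIndepOn ℝ β (t : Set ι) ∧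
      ∃ y : ι → ℝ, (∀ i ∈ t, 0 ≤ y i) ∧ ∑ i ∈ t, y i • β i = ∑ i ∈ s, x i • β i := by
  classical
  induction s using Finset.strongInduction generalizing x with
  | H s ih =>
  by_cases hs : LinearIndepOn ℝ β (s : Set ι)
  · exact ⟨s, subset_rfl, hs, x, hx, rfl⟩
  obtain ⟨g, hg, hpos⟩ : ∃ g : ι → ℝ, ∑ i ∈ s, g i • β i = 0 ∧ ∃ j ∈ s, 0 < g j := by
    obtain ⟨g, hg, j, hj, hgj⟩ := not_linearIndepOn_finset_iff.mp hs
    rcases hgj.lt_or_gt with hneg | hpos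
    · exact ⟨-g, by simp [Finset.sum_neg_distrib, hg], j, hj, by simpa using hneg⟩
    · exact ⟨g, hg, j, hj, hpos⟩
  obtain ⟨c, i₀, hi₀, hnonneg, hzero⟩ := exists_nonneg_sub_mul_eq_zero hx hpos
  have hsum : ∑ i ∈ s.erase i₀, (x i - c * g i) • β i = ∑ i ∈ s, x i • β i := by
    rw [Finset.sum_erase _ (by simp [hzero])]
    simp [sub_smul, mul_smul, Finset.sum_sub_distrib, ← Finset.smul_sum, hg]
  obtain ⟨t, hts, ht, y, hy, hyt⟩ := ih (s.erase i₀) (Finset.erase_ssubset hi₀) _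
    fun i hi => hnonneg i (Finset.mem_of_mem_erase hi)
  exact ⟨t, hts.trans (Finset.erase_subset _ _), ht, y, hy, hyt.trans hsum⟩

theorem conicalHull_eq_iUnion [Fintype ι] (β : ι → W) :
    conicalHull β =
      ⋃ (t : Finset ι) (_ : LinearIndepOn ℝ β (t : Set ι)), conicalHull (fun i : t => β i) := by
  classical
  ext v
  simp only [Set.mem_iUnion]
  constructor
  · rintro ⟨x, hx, rfl⟩
    obtain ⟨t, -, ht, y, hy, hyt⟩ := exists_linearIndepOn_sum_eq β Finset.univ x fun i _ => hx i
    exact ⟨t, ht, fun i => y i, fun i => hy i i.2,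
      by rw [← hyt, Finset.sum_coe_sort t fun i => y i • β i]⟩
  · rintro ⟨t, -, y, hy, rfl⟩
    refine ⟨fun i => if h : i ∈ t then y ⟨i, h⟩ else 0, fun i => ?_, ?_⟩
    · dsimp only
      split_ifs
      exacts [hy _, le_rfl]
    · rw [← Finset.sum_subset t.subset_univ fun i _ hi => by simp [hi], ← t.sum_attach]
      exact Finset.sum_congr rfl fun i _ => by simp [i.2]

variable [TopologicalSpace W] [IsTopologicalAddGroup W] [ContinuousSMul ℝ W] [T2Space W]

theorem LinearIndependent.isClosed_conicalHull [Fintype ι] {β : ι → W}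
    (hβ : LinearIndependent ℝ β) : IsClosed (conicalHull β) := by
  have : conicalHull β = Fintype.linearCombination ℝ β '' Set.Ici 0 := by
    ext v
    simp [conicalHull, Fintype.linearCombination_apply, Pi.le_def]
  rw [this]
  exact (LinearMap.isClosedEmbedding_of_injective (LinearMap.ker_eq_bot.mpr
    hβ.fintypeLinearCombination_injective)).isClosedMap _ isClosed_Ici

theorem isClosed_conicalHull [Fintype ι] (β : ι → W) : IsClosed (conicalHull β) := by
  rw [conicalHull_eq_iUnion]
  exact isClosed_iUnion_of_finite fun t =>
    isClosed_iUnion_of_finite fun ht => LinearIndependent.isClosed_conicalHull ht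

theorem mem_conicalHull_of_isVonNBounded [Fintype ι] {β : ι → W} {S : Set W}
    (hS : Bornology.IsVonNBounded ℝ S) {v : W}
    (h : ∀ n : ℕ, 0 < n → ∃ ν ∈ S, (n : ℝ) • v + ν ∈ conicalHull β) :
    v ∈ conicalHull β := by
  choose ν hνS hν using fun n : ℕ => h (n + 1) n.succ_pos
  have hsmall : Tendsto (fun n : ℕ => ((n + 1 : ℕ) : ℝ)⁻¹ • ν n) atTop (𝓝 0) :=
    hS.smul_tendsto_zero (.of_forall hνS)
      (tendsto_inv_atTop_nhds_zero_nat.comp (tendsto_add_atTop_nat 1))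
  have hmem (n : ℕ) : v + ((n + 1 : ℕ) : ℝ)⁻¹ • ν n ∈ conicalHull β := by
    convert smul_mem_conicalHull (inv_nonneg.mpr (Nat.cast_nonneg (n + 1))) (hν n) using 1
    rw [smul_add, smul_smul, inv_mul_cancel₀ (by positivity), one_smul]
  exact (isClosed_conicalHull β).mem_of_tendsto (by simpa using tendsto_const_nhds.add hsmall)
    (.of_forall hmem)

end ConicalHull

theorem mem_conicalHull_of_finite {ι V : Type*} [AddCommGroup V] [Module ℝ V]
    [FiniteDimensional ℝ V] [Fintype ι] {β : ι → V} {F : Set V} (hF : F.Finite) {v : V}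
    (h : ∀ n : ℕ, 0 < n → ∃ ν ∈ F, (n : ℝ) • v + ν ∈ conicalHull β) :
    v ∈ conicalHull β := by
  -- `V` carries no topology, so pass to coordinates.
  let e := (Module.finBasis ℝ V).equivFun
  have he : e v ∈ conicalHull (e ∘ β) :=
    mem_conicalHull_of_isVonNBounded (hF.image e).isVonNBounded fun n hn => by
      obtain ⟨ν, hνF, hν⟩ := h n hn
      exact ⟨e ν, Set.mem_image_of_mem e hνF, by simpa using e.toLinearMap.map_mem_conicalHull hν⟩
  simpa [Function.comp_def] using e.symm.toLinearMap.map_mem_conicalHull he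

/-- **Limit argument from the proof of (c) ⇒ (a)**: Let `V` be a finite-dimensional real
vector space, `α₁, …, α_r ∈ V`, `F ⊂ V` a finite set, and `μ, λ ∈ V`.  If for every positive
integer `n` there are nonnegative integers `n₁, …, n_r` and `ν ∈ F` with
`n μ = n λ - Σᵢ nᵢ αᵢ + ν`, then `λ - μ` lies in the convex cone generated by the `αᵢ`,
i.e. `λ - μ = Σᵢ xᵢ αᵢ` with all `xᵢ ≥ 0`. -/
theorem stmt_6 {V : Type*} [AddCommGroup V] [Module ℝ V] [FiniteDimensional ℝ V]
    (r : ℕ) (α : Fin r → V) (F : Set V) (hF : F.Finite) (μ lam : V)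
    (h : ∀ n : ℕ, 0 < n → ∃ (c : Fin r → ℕ) (ν : V), ν ∈ F ∧
      (n : ℝ) • μ = (n : ℝ) • lam - (∑ i, (c i : ℝ) • α i) + ν) :
    ∃ x : Fin r → ℝ, (∀ i, 0 ≤ x i) ∧ lam - μ = ∑ i, x i • α i := by
  have hcone : lam - μ ∈ conicalHull α := mem_conicalHull_of_finite hF fun n hn => by
    obtain ⟨c, ν, hνF, hn⟩ := h n hn
    exact ⟨ν, hνF, fun i => c i, fun i => (c i).cast_nonneg, by rw [smul_sub, hn]; abel⟩
  obtain ⟨x, hx, hsum⟩ := hcone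
  exact ⟨x, hx, hsum.symm⟩
end

section
/- Let K be an algebraically closed field of characteristic zero, let Γ be a group, and let V be a nonzero finite-dimensional K-linear representation of Γ. Then V is one-dimensional if and only if the tensor product representation V ⊗ V is irreducible (simple). -/
/-!
A one-dimensional representation is simple, and so is `V ⊗ V` when `dim V = 1`. Conversely, if
`V ⊗ V` is simple then by Schur's lemma the braiding `x ⊗ y ↦ y ⊗ x`, being an endomorphism of
`V ⊗ V`, is a scalar `c`. For two distinct basis vectors `eᵢ, eⱼ` of `V` this would make the
distinct basis vectors `eⱼ ⊗ eᵢ` and `c • eᵢ ⊗ eⱼ` of `V ⊗ V` equal, so `dim V ≤ 1`.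
-/

open CategoryTheory MonoidalCategory

open Module TensorProduct

theorem finrank_le_one_of_tmul_comm_eq_smul {K V : Type*} [Field K] [AddCommGroup V]
    [Module K V] [FiniteDimensional K V] (c : K)
    (h : ∀ x y : V, y ⊗ₜ[K] x = c • (x ⊗ₜ[K] y)) : finrank K V ≤ 1 := by
  by_contra! hV
  let b := finBasis K V
  let i : Fin (finrank K V) := ⟨0, by omega⟩
  let j : Fin (finrank K V) := ⟨1, hV⟩
  have hij : i ≠ j := by simp [i, j, Fin.ext_iff]
  have := congrArg (fun t => (b.tensorProduct b).repr t (j, i)) (h (b i) (b j))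
  simp [Basis.tensorProduct_repr_tmul_apply, hij, hij.symm] at this

namespace FDRep

variable {K Γ : Type} [Field K] [Group Γ]

theorem simple_of_finrank_eq_one {V : FDRep K Γ} (h : finrank K V = 1) : Simple V := by
  let F := Action.forget (FGModuleCat K) Γ ⋙ forget₂ (FGModuleCat K) (ModuleCat K)
  have : Simple (F.obj V) :=
    (simple_iff_isSimpleModule' _).mpr (isSimpleModule_iff_finrank_eq_one.mpr h)
  exact F.simple_of_simple_obj V

theorem exists_tmul_comm_eq_smul [IsAlgClosed K] (V : FDRep K Γ) [Simple (V ⊗ V)] :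
    ∃ c : K, ∀ x y : V, y ⊗ₜ[K] x = c • (x ⊗ₜ[K] y) := by
  obtain ⟨c, hc⟩ := endomorphism_simple_eq_smul_id K (β_ V V).hom
  refine ⟨c, fun x y => ?_⟩
  have h := ConcreteCategory.congr_hom (congrArg Action.Hom.hom hc) (x ⊗ₜ[K] y)
  simp only [Action.smul_hom, Action.id_hom] at h
  exact h.symm

end FDRep

theorem stmt_9_general {K Γ : Type} [Field K] [IsAlgClosed K] [Group Γ]
    (V : FDRep K Γ) (hV : Nontrivial V) :
    Module.finrank K V = 1 ↔ Simple (V ⊗ V : FDRep K Γ) := by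
  constructor
  · intro h
    apply FDRep.simple_of_finrank_eq_one
    show finrank K (V ⊗[K] V) = 1
    rw [finrank_tensorProduct, h]
  · intro hS
    obtain ⟨c, hc⟩ := FDRep.exists_tmul_comm_eq_smul V
    have hle := finrank_le_one_of_tmul_comm_eq_smul c hc
    have hpos := finrank_pos (R := K) (M := V)
    omega

/-- **Lemma (isom) (c), key observation**: Let `K` be an algebraically closed field of
characteristic zero, `Γ` a group, and `V` a nonzero finite-dimensional `K`-linear
representation of `Γ`.  Then `V` is one-dimensional if and only if the tensor product
representation `V ⊗ V` is irreducible (simple). -/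
theorem stmt_9 {K Γ : Type} [Field K] [IsAlgClosed K] [CharZero K] [Group Γ]
    (V : FDRep K Γ) (hV : Nontrivial V) :
    Module.finrank K V = 1 ↔ Simple (V ⊗ V : FDRep K Γ) :=
  stmt_9_general V hV
end
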